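/- Let α > 1, Δ > 0, and let c > 0 satisfy c ≤ Φ(Δ/2) − 1/2 (so that the curve t ↦ Φ(Φ^{-1}(1−t) − Δ) intersects t ↦ 1 − t − 2c on (0,1)). Define f : (0,1) → [0,1] by f(t) = max{ Φ(Φ^{-1}(1−t) − Δ), 1 − t − 2c }. Then the Rényi conversion of f satisfies (1/(α−1))·log ∫₀¹ |f'(t)|^{1−α} dt ≥ 2c · (α·Δ²/2), where f' denotes the almost-everywhere derivative of f. -/

import Mathlib

open MeasureTheory Set Filter Real

/-- The standard Gaussian cumulative distribution function. -/
noncomputable def Phi (x : ℝ) : ℝ :=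
  (∫ t in Set.Iic x, Real.exp (-t ^ 2 / 2)) / Real.sqrt (2 * Real.pi)

/-- The inverse of the standard Gaussian cumulative distribution function. -/
noncomputable def PhiInv : ℝ → ℝ :=
  Function.invFun Phi

noncomputable def phi (x : ℝ) : ℝ := Real.exp (-x ^ 2 / 2) / Real.sqrt (2 * Real.pi)

lemma sqrt2pi_pos : 0 < Real.sqrt (2 * Real.pi) := Real.sqrt_pos.2 (by positivity)

lemma phi_pos (x : ℝ) : 0 < phi x := div_pos (Real.exp_pos _) sqrt2pi_pos

lemma gauss_eq (t : ℝ) : Real.exp (-t ^ 2 / 2) = Real.exp (-(1/2 : ℝ) * t ^ 2) := by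
  ring_nf

lemma integrable_gauss : Integrable (fun t : ℝ => Real.exp (-t ^ 2 / 2)) := by
  simp only [gauss_eq]
  exact integrable_exp_neg_mul_sq (by norm_num)

lemma integral_gauss : (∫ t : ℝ, Real.exp (-t ^ 2 / 2)) = Real.sqrt (2 * Real.pi) := by
  simp only [gauss_eq]
  rw [integral_gaussian]
  rw [show Real.pi / (1/2) = 2 * Real.pi by ring]

lemma integrable_phi : Integrable phi := integrable_gauss.div_const _

lemma integral_phi : (∫ t : ℝ, phi t) = 1 := by
  unfold phi
  rw [integral_div, integral_gauss, div_self sqrt2pi_pos.ne']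

lemma Phi_eq_int (x : ℝ) : Phi x = ∫ t in Set.Iic x, phi t := by
  unfold Phi phi
  rw [integral_div]

lemma Phi_eq_add (y : ℝ) : Phi y = Phi 0 + ∫ t in (0:ℝ)..y, phi t := by
  rw [Phi_eq_int, Phi_eq_int,
    ← intervalIntegral.integral_Iic_sub_Iic integrable_phi.integrableOn
      integrable_phi.integrableOn]
  ring

lemma continuous_phi : Continuous phi := by
  unfold phi
  fun_prop

lemma Phi_hasDerivAt (x : ℝ) : HasDerivAt Phi (phi x) x := by
  have h := intervalIntegral.integral_hasDerivAt_right
    (integrable_phi.intervalIntegrable (a := 0) (b := x))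
    (continuous_phi.stronglyMeasurableAtFilter _ _)
    continuous_phi.continuousAt
  have : HasDerivAt (fun y => Phi 0 + ∫ t in (0:ℝ)..y, phi t) (phi x) x :=
    h.const_add _
  exact this.congr_of_eventuallyEq (Filter.Eventually.of_forall fun y => Phi_eq_add y)

lemma Phi_strictMono : StrictMono Phi := by
  apply strictMono_of_deriv_pos
  intro x
  rw [(Phi_hasDerivAt x).deriv]
  exact phi_pos x

lemma Phi_continuous : Continuous Phi := by
  have : Differentiable ℝ Phi := fun x => (Phi_hasDerivAt x).differentiableAt
  exact this.continuous

lemma Phi_add_neg (x : ℝ) : Phi x + Phi (-x) = 1 := by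
  have h1 : Phi (-x) = ∫ t in Set.Ici x, phi t := by
    rw [Phi_eq_int]
    have : (∫ t in Set.Iic (-x), phi t) = ∫ t in Set.Iic (-x), phi (-t) := by
      apply setIntegral_congr_fun measurableSet_Iic
      intro t _
      unfold phi; ring_nf
    rw [this, integral_comp_neg_Iic, neg_neg, ← integral_Ici_eq_integral_Ioi]
  rw [Phi_eq_int, h1, ← integral_phi]
  rw [← MeasureTheory.integral_add_compl (measurableSet_Iic (a := x)) integrable_phi]
  congr 1
  rw [compl_Iic, ← integral_Ici_eq_integral_Ioi]


lemma Phi_nonneg (x : ℝ) : 0 ≤ Phi x := by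
  rw [Phi_eq_int]
  exact setIntegral_nonneg measurableSet_Iic fun t _ => (phi_pos t).le

lemma Phi_lt_one (x : ℝ) : Phi x < 1 := by
  have h := Phi_add_neg (x + 1)
  have h2 : Phi x < Phi (x + 1) := Phi_strictMono (by linarith)
  have := Phi_nonneg (-(x + 1))
  linarith

lemma Phi_pos (x : ℝ) : 0 < Phi x := by
  have h := Phi_lt_one (-x)
  have := Phi_add_neg x
  linarith

lemma Phi_mem_Ioo (x : ℝ) : Phi x ∈ Set.Ioo (0:ℝ) 1 := ⟨Phi_pos x, Phi_lt_one x⟩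

lemma Phi_tendsto_atTop : Tendsto (fun n : ℕ => Phi n) atTop (nhds 1) := by
  have h : Tendsto (fun n : ℕ => ∫ t in Set.Iic (n:ℝ), phi t) atTop
      (nhds (∫ t in ⋃ n : ℕ, Set.Iic (n:ℝ), phi t)) := by
    apply tendsto_setIntegral_of_monotone (fun n => measurableSet_Iic)
    · intro m n hmn
      exact Set.Iic_subset_Iic.2 (by exact_mod_cast hmn)
    · exact integrable_phi.integrableOn
  have hU : (⋃ n : ℕ, Set.Iic (n:ℝ)) = Set.univ := by
    ext x
    simp only [Set.mem_iUnion, Set.mem_Iic, Set.mem_univ, iff_true]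
    obtain ⟨n, hn⟩ := exists_nat_ge x
    exact ⟨n, hn⟩
  rw [hU] at h
  simp only [setIntegral_univ, integral_phi] at h
  simpa only [Phi_eq_int] using h

lemma Phi_surj_Ioo {y : ℝ} (hy : y ∈ Set.Ioo (0:ℝ) 1) : ∃ x, Phi x = y := by
  obtain ⟨hy0, hy1⟩ := hy
  have h1 : ∃ n : ℕ, y < Phi n := by
    by_contra h
    push_neg at h
    have := le_of_tendsto' Phi_tendsto_atTop h
    linarith
  obtain ⟨n, hn⟩ := h1
  have h2 : ∃ m : ℕ, Phi (-(m:ℝ)) < y := by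
    by_contra h
    push_neg at h
    have h3 : ∃ m : ℕ, 1 - y < Phi m := by
      by_contra h'
      push_neg at h'
      have := le_of_tendsto' Phi_tendsto_atTop h'
      linarith
    obtain ⟨m, hm⟩ := h3
    have := Phi_add_neg (m:ℝ)
    have := h m
    linarith
  obtain ⟨m, hm⟩ := h2
  have hmn : -(m:ℝ) ≤ (n:ℝ) := by
    by_contra h
    push_neg at h
    exact absurd (Phi_strictMono h) (by linarith)
  obtain ⟨x, -, hx⟩ := intermediate_value_Icc hmn Phi_continuous.continuousOn
    ⟨hm.le, hn.le⟩
  exact ⟨x, hx⟩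


lemma PhiInv_Phi (x : ℝ) : PhiInv (Phi x) = x :=
  Function.leftInverse_invFun Phi_strictMono.injective x

lemma Phi_PhiInv {y : ℝ} (hy : y ∈ Set.Ioo (0:ℝ) 1) : Phi (PhiInv y) = y :=
  Function.invFun_eq (Phi_surj_Ioo hy)

lemma PhiInv_mem_nhds {x : ℝ} {s : Set ℝ} (hs : s ∈ nhds x) :
    ∀ᶠ y in nhds (Phi x), PhiInv y ∈ s := by
  obtain ⟨ε, hε, hball⟩ := Metric.mem_nhds_iff.1 hs
  have hlt : Phi (x - ε/2) < Phi x := Phi_strictMono (by linarith)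
  have hgt : Phi x < Phi (x + ε/2) := Phi_strictMono (by linarith)
  have hnb : Set.Ioo (Phi (x - ε/2)) (Phi (x + ε/2)) ∈ nhds (Phi x) :=
    Ioo_mem_nhds hlt hgt
  filter_upwards [hnb] with y hy
  have hy01 : y ∈ Set.Ioo (0:ℝ) 1 :=
    ⟨(Phi_pos _).trans hy.1, hy.2.trans (Phi_lt_one _)⟩
  have h1 : x - ε/2 < PhiInv y := by
    by_contra h
    push_neg at h
    have := Phi_strictMono.monotone h
    rw [Phi_PhiInv hy01] at this
    linarith [hy.1]
  have h2 : PhiInv y < x + ε/2 := by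
    by_contra h
    push_neg at h
    have := Phi_strictMono.monotone h
    rw [Phi_PhiInv hy01] at this
    linarith [hy.2]
  apply hball
  rw [Metric.mem_ball, Real.dist_eq, abs_lt]
  constructor <;> linarith

lemma PhiInv_continuousAt {y : ℝ} (hy : y ∈ Set.Ioo (0:ℝ) 1) : ContinuousAt PhiInv y := by
  obtain ⟨x, rfl⟩ := Phi_surj_Ioo hy
  rw [ContinuousAt, PhiInv_Phi]
  intro s hs
  exact PhiInv_mem_nhds hs

lemma PhiInv_hasDerivAt {y : ℝ} (hy : y ∈ Set.Ioo (0:ℝ) 1) :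
    HasDerivAt PhiInv (phi (PhiInv y))⁻¹ y := by
  apply HasDerivAt.of_local_left_inverse (PhiInv_continuousAt hy)
    (Phi_hasDerivAt (PhiInv y)) (phi_pos _).ne'
  have : Set.Ioo (0:ℝ) 1 ∈ nhds y := Ioo_mem_nhds hy.1 hy.2
  filter_upwards [this] with z hz
  exact Phi_PhiInv hz

lemma phi_le_phi {x y : ℝ} (h : y ^ 2 ≤ x ^ 2) : phi x ≤ phi y := by
  unfold phi
  have := sqrt2pi_pos
  gcongr

noncomputable def chi (Δ c u : ℝ) : ℝ := Phi u - Phi (u - Δ) - 2 * c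

lemma chi_hasDerivAt (Δ c u : ℝ) :
    HasDerivAt (chi Δ c) (phi u - phi (u - Δ)) u := by
  have h1 := Phi_hasDerivAt u
  have h2 : HasDerivAt (fun v : ℝ => Phi (v - Δ)) (phi (u - Δ)) u := by
    have := (Phi_hasDerivAt (u - Δ)).comp u ((hasDerivAt_id u).sub_const Δ)
    simpa [Function.comp_def] using this
  exact (h1.sub h2).sub_const (2 * c)

lemma chi_continuous (Δ c : ℝ) : Continuous (chi Δ c) := by
  exact (Phi_continuous.sub (Phi_continuous.comp
    (continuous_id.sub continuous_const))).sub continuous_const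

lemma chi_strictMonoOn {Δ : ℝ} (hΔ : 0 < Δ) (c : ℝ) :
    StrictMonoOn (chi Δ c) (Set.Iic (Δ / 2)) := by
  apply strictMonoOn_of_deriv_pos (convex_Iic _)
    (chi_continuous Δ c).continuousOn
  intro u hu
  rw [interior_Iic] at hu
  rw [(chi_hasDerivAt Δ c u).deriv]
  have : phi (u - Δ) < phi u := by
    have hlt : u ^ 2 < (u - Δ) ^ 2 := by nlinarith [Set.mem_Iio.1 hu]
    have h1 := phi_le_phi (x := u - Δ) (y := u) hlt.le
    rcases lt_or_eq_of_le h1 with h | h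
    · exact h
    · exfalso
      have : Real.exp (-(u-Δ)^2/2) = Real.exp (-u^2/2) := by
        unfold phi at h
        field_simp at h
        rw [neg_div, neg_div]; linarith [h]
      rw [Real.exp_eq_exp] at this
      nlinarith
  linarith

lemma chi_symm (Δ c u : ℝ) : chi Δ c (Δ - u) = chi Δ c u := by
  unfold chi
  have h1 : Phi (Δ - u) = 1 - Phi (u - Δ) := by
    have := Phi_add_neg (u - Δ)
    rw [show -(u - Δ) = Δ - u by ring] at this
    linarith
  have h2 : Phi (Δ - u - Δ) = 1 - Phi u := by
    have := Phi_add_neg u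
    rw [show Δ - u - Δ = -u by ring]
    linarith
  rw [h1, h2]
  ring

lemma chi_strictAntiOn {Δ : ℝ} (hΔ : 0 < Δ) (c : ℝ) :
    StrictAntiOn (chi Δ c) (Set.Ici (Δ / 2)) := by
  intro x hx y hy hxy
  have h1 : Δ - y < Δ - x := by linarith
  have hx' : Δ - x ∈ Set.Iic (Δ / 2) := by
    simp only [Set.mem_Ici] at hx; simp only [Set.mem_Iic]; linarith
  have hy' : Δ - y ∈ Set.Iic (Δ / 2) := by
    simp only [Set.mem_Ici] at hy; simp only [Set.mem_Iic]; linarith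
  have := chi_strictMonoOn hΔ c hy' hx' h1
  rwa [chi_symm, chi_symm] at this

lemma chi_half_nonneg {Δ c : ℝ} (hint : c ≤ Phi (Δ / 2) - 1 / 2) :
    0 ≤ chi Δ c (Δ / 2) := by
  unfold chi
  have h := Phi_add_neg (Δ / 2)
  rw [show Δ / 2 - Δ = -(Δ/2) by ring]
  linarith

lemma exists_root {Δ c : ℝ} (hΔ : 0 < Δ) (hc : 0 < c)
    (hint : c ≤ Phi (Δ / 2) - 1 / 2) :
    ∃ al, al ≤ Δ / 2 ∧ chi Δ c al = 0 := by
  obtain ⟨n, hn⟩ : ∃ n : ℕ, 1 - 2 * c < Phi n := by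
    have h : Tendsto (fun n : ℕ => Phi n) atTop (nhds 1) := Phi_tendsto_atTop
    have := (tendsto_order.1 h).1 (1 - 2 * c) (by linarith)
    exact this.exists
  set M := min (-(n:ℝ)) (Δ / 2) with hM
  have hM1 : M ≤ Δ / 2 := min_le_right _ _
  have hMneg : chi Δ c M < 0 := by
    have h1 : Phi M ≤ Phi (-(n:ℝ)) := Phi_strictMono.monotone (min_le_left _ _)
    have h2 : Phi (-(n:ℝ)) = 1 - Phi n := by linarith [Phi_add_neg (n:ℝ)]
    have h3 := Phi_pos (M - Δ)
    unfold chi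
    linarith
  have h0 : (0:ℝ) ∈ Set.Icc (chi Δ c M) (chi Δ c (Δ/2)) :=
    ⟨hMneg.le, chi_half_nonneg hint⟩
  obtain ⟨al, hal, haleq⟩ := intermediate_value_Icc hM1
    (chi_continuous Δ c).continuousOn h0
  exact ⟨al, hal.2, haleq⟩

section Roots

variable {Δ c : ℝ} (hΔ : 0 < Δ) {al : ℝ} (hal : al ≤ Δ / 2) (hchi : chi Δ c al = 0)

include hchi in
lemma chi_root_r : chi Δ c (Δ - al) = 0 := by rw [chi_symm]; exact hchi

include hΔ hal hchi in
lemma chi_pos_iff : ∀ u, al < u → u < Δ - al → 0 < chi Δ c u := by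
  intro u h1 h2
  rcases le_total u (Δ / 2) with hu | hu
  · rcases eq_or_lt_of_le hal with he | hlt
    · exfalso; rw [he] at h1; linarith
    · calc 0 = chi Δ c al := hchi.symm
        _ < chi Δ c u := chi_strictMonoOn hΔ c (Set.mem_Iic.2 hal) (Set.mem_Iic.2 hu) h1
  · have h1' : al < Δ - u := by linarith
    have h2' : Δ - u ≤ Δ / 2 := by linarith
    rw [← chi_symm]
    rcases eq_or_lt_of_le hal with he | hlt
    · exfalso; rw [he] at h1'; linarith
    · calc 0 = chi Δ c al := hchi.symm
        _ < chi Δ c (Δ - u) := chi_strictMonoOn hΔ c (Set.mem_Iic.2 hal) (Set.mem_Iic.2 h2') h1'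

include hΔ hal hchi in
lemma chi_neg_of_lt : ∀ u, u < al → chi Δ c u < 0 := by
  intro u hu
  calc chi Δ c u < chi Δ c al :=
        chi_strictMonoOn hΔ c (Set.mem_Iic.2 (by linarith)) (Set.mem_Iic.2 hal) hu
    _ = 0 := hchi

include hΔ hal hchi in
lemma chi_neg_of_gt : ∀ u, Δ - al < u → chi Δ c u < 0 := by
  intro u hu
  have : Δ - u < al := by linarith
  have h := chi_neg_of_lt hΔ hal hchi (Δ - u) this
  rwa [chi_symm] at h

include hΔ hal hchi in
lemma chi_zero_subset : {u | chi Δ c u = 0} ⊆ {al, Δ - al} := by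
  intro u hu
  simp only [Set.mem_setOf_eq] at hu
  simp only [Set.mem_insert_iff, Set.mem_singleton_iff]
  by_contra h
  push_neg at h
  obtain ⟨h1, h2⟩ := h
  rcases lt_trichotomy u al with hlt | heq | hgt
  · exact absurd hu (chi_neg_of_lt hΔ hal hchi u hlt).ne
  · exact h1 heq
  · rcases lt_trichotomy u (Δ - al) with hlt' | heq' | hgt'
    · exact absurd hu (chi_pos_iff hΔ hal hchi u hgt hlt').ne'
    · exact h2 heq'
    · exact absurd hu (chi_neg_of_gt hΔ hal hchi u hgt').ne

end Roots

section DerivF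

variable {a Δ c : ℝ}

lemma g_hasDerivAt {t : ℝ} (ht : t ∈ Set.Ioo (0:ℝ) 1) (Δ : ℝ) :
    HasDerivAt (fun s : ℝ => Phi (PhiInv (1 - s) - Δ))
      (-(phi (PhiInv (1 - t) - Δ) / phi (PhiInv (1 - t)))) t := by
  have ht' : (1 - t) ∈ Set.Ioo (0:ℝ) 1 := ⟨by linarith [ht.2], by linarith [ht.1]⟩
  have h1 : HasDerivAt (fun s : ℝ => 1 - s) (-1 : ℝ) t := by
    simpa using (hasDerivAt_id t).const_sub 1
  have h2 := (PhiInv_hasDerivAt ht').comp t h1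
  have h3 := h2.sub_const Δ
  have h4 := (Phi_hasDerivAt (PhiInv (1 - t) - Δ)).comp t h3
  convert h4 using 1
  · rfl
  · rfl
  · rfl
  · ring

lemma ell_lt_g {t : ℝ} (ht : t ∈ Set.Ioo (0:ℝ) 1) :
    (1 - t - 2 * c) - Phi (PhiInv (1 - t) - Δ) = chi Δ c (PhiInv (1 - t)) := by
  have ht' : (1 - t) ∈ Set.Ioo (0:ℝ) 1 := ⟨by linarith [ht.2], by linarith [ht.1]⟩
  have h := Phi_PhiInv ht'
  unfold chi
  rw [h]
  ring

lemma deriv_f_of_pos {t : ℝ} (ht : t ∈ Set.Ioo (0:ℝ) 1)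
    (hpos : 0 < chi Δ c (PhiInv (1 - t))) :
    deriv (fun s : ℝ => max (Phi (PhiInv (1 - s) - Δ)) (1 - s - 2 * c)) t = -1 := by
  have hlt : Phi (PhiInv (1 - t) - Δ) < 1 - t - 2 * c := by
    have := ell_lt_g (c := c) (Δ := Δ) ht
    linarith
  have hg : ContinuousAt (fun s : ℝ => Phi (PhiInv (1 - s) - Δ)) t :=
    (g_hasDerivAt ht Δ).continuousAt
  have hl : ContinuousAt (fun s : ℝ => 1 - s - 2 * c) t := by fun_prop
  have hev : ∀ᶠ s in nhds t, Phi (PhiInv (1 - s) - Δ) < 1 - s - 2 * c :=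
    hg.eventually_lt hl hlt
  have heq : (fun s : ℝ => max (Phi (PhiInv (1 - s) - Δ)) (1 - s - 2 * c))
      =ᶠ[nhds t] (fun s : ℝ => 1 - s - 2 * c) := by
    filter_upwards [hev] with s hs
    exact max_eq_right hs.le
  rw [heq.deriv_eq]
  have : HasDerivAt (fun s : ℝ => 1 - s - 2 * c) (-1 : ℝ) t := by
    simpa using ((hasDerivAt_id t).const_sub 1).sub_const (2 * c)
  exact this.deriv

lemma deriv_f_of_neg {t : ℝ} (ht : t ∈ Set.Ioo (0:ℝ) 1)
    (hneg : chi Δ c (PhiInv (1 - t)) < 0) :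
    deriv (fun s : ℝ => max (Phi (PhiInv (1 - s) - Δ)) (1 - s - 2 * c)) t
      = -(phi (PhiInv (1 - t) - Δ) / phi (PhiInv (1 - t))) := by
  have hlt : 1 - t - 2 * c < Phi (PhiInv (1 - t) - Δ) := by
    have := ell_lt_g (c := c) (Δ := Δ) ht
    linarith
  have hg : ContinuousAt (fun s : ℝ => Phi (PhiInv (1 - s) - Δ)) t :=
    (g_hasDerivAt ht Δ).continuousAt
  have hl : ContinuousAt (fun s : ℝ => 1 - s - 2 * c) t := by fun_prop
  have hev := hl.eventually_lt hg hlt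
  have heq : (fun s : ℝ => max (Phi (PhiInv (1 - s) - Δ)) (1 - s - 2 * c))
      =ᶠ[nhds t] (fun s : ℝ => Phi (PhiInv (1 - s) - Δ)) := by
    filter_upwards [hev] with s hs
    exact max_eq_left hs.le
  rw [heq.deriv_eq]
  exact (g_hasDerivAt ht Δ).deriv

lemma phi_div_phi (u Δ : ℝ) :
    phi (u - Δ) / phi u = Real.exp (Δ * u - Δ ^ 2 / 2) := by
  unfold phi
  rw [div_div_div_eq, mul_comm (Real.sqrt (2*Real.pi)) (Real.exp (-u^2/2)), mul_div_mul_right _ _ sqrt2pi_pos.ne', ← Real.exp_sub]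
  congr 1
  ring

end DerivF

lemma F_image : (fun u : ℝ => 1 - Phi u) '' Set.univ = Set.Ioo (0:ℝ) 1 := by
  ext y
  simp only [Set.image_univ, Set.mem_range, Set.mem_Ioo]
  constructor
  · rintro ⟨u, rfl⟩
    have := Phi_mem_Ioo u
    exact ⟨by linarith [this.2], by linarith [this.1]⟩
  · rintro ⟨h0, h1⟩
    obtain ⟨x, hx⟩ := Phi_surj_Ioo (y := 1 - y) ⟨by linarith, by linarith⟩
    exact ⟨x, by linarith⟩

lemma integral_Ioo_cov (h : ℝ → ℝ) :
    ∫ t in Set.Ioo (0:ℝ) 1, h t = ∫ u : ℝ, phi u * h (1 - Phi u) := by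
  have hderiv : ∀ x ∈ Set.univ, HasDerivWithinAt (fun u : ℝ => 1 - Phi u)
      (-(phi x)) Set.univ x := by
    intro x _
    exact (((Phi_hasDerivAt x).const_sub 1)).hasDerivWithinAt
  have hinj : Set.InjOn (fun u : ℝ => 1 - Phi u) Set.univ := by
    intro x _ y _ hxy
    simp only at hxy
    exact Phi_strictMono.injective (by linarith)
  have := integral_image_eq_integral_abs_deriv_smul MeasurableSet.univ hderiv hinj h
  rw [F_image] at this
  rw [this, setIntegral_univ]
  congr 1
  ext u
  rw [abs_neg, abs_of_pos (phi_pos u), smul_eq_mul]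

noncomputable def wfun (a Δ u : ℝ) : ℝ := Real.exp ((Δ * u - Δ ^ 2 / 2) * (1 - a))

lemma one_sub_Phi_mem (u : ℝ) : 1 - Phi u ∈ Set.Ioo (0:ℝ) 1 := by
  have := Phi_mem_Ioo u
  exact ⟨by linarith [this.2], by linarith [this.1]⟩

lemma PhiInv_one_sub (u : ℝ) : PhiInv (1 - (1 - Phi u)) = u := by
  rw [show 1 - (1 - Phi u) = Phi u by ring, PhiInv_Phi]

lemma integrand_of_neg {a Δ c u : ℝ} (hneg : chi Δ c u < 0) :
    |deriv (fun s : ℝ => max (Phi (PhiInv (1 - s) - Δ)) (1 - s - 2 * c)) (1 - Phi u)|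
      ^ (1 - a) = wfun a Δ u := by
  rw [deriv_f_of_neg (one_sub_Phi_mem u) (by rw [PhiInv_one_sub]; exact hneg),
    PhiInv_one_sub, abs_neg, abs_of_pos (div_pos (phi_pos _) (phi_pos _)),
    phi_div_phi, ← Real.exp_mul]
  rfl

lemma integrand_of_pos {a Δ c u : ℝ} (hpos : 0 < chi Δ c u) :
    |deriv (fun s : ℝ => max (Phi (PhiInv (1 - s) - Δ)) (1 - s - 2 * c)) (1 - Phi u)|
      ^ (1 - a) = 1 := by
  rw [deriv_f_of_pos (one_sub_Phi_mem u) (by rw [PhiInv_one_sub]; exact hpos)]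
  simp [Real.one_rpow]

lemma phi_mul_w (a Δ u : ℝ) :
    phi u * wfun a Δ u
      = Real.exp (a * (a - 1) * Δ ^ 2 / 2) * phi (u + (a - 1) * Δ) := by
  unfold phi wfun
  field_simp
  rw [← Real.exp_add, ← Real.exp_add]
  congr 1
  ring

lemma integrable_phi_shift (β : ℝ) : Integrable (fun u : ℝ => phi (u + β)) := by
  have h := (measurePreserving_add_right (volume : Measure ℝ) β).integrable_comp
    (g := phi) continuous_phi.aestronglyMeasurable
  exact (h.2 integrable_phi : Integrable (phi ∘ fun x => x + β) volume)

lemma integrable_phi_w (a Δ : ℝ) : Integrable (fun u : ℝ => phi u * wfun a Δ u) := by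
  have : (fun u : ℝ => phi u * wfun a Δ u)
      = fun u => Real.exp (a * (a - 1) * Δ ^ 2 / 2) * phi (u + (a - 1) * Δ) := by
    funext u; exact phi_mul_w a Δ u
  rw [this]
  exact (integrable_phi_shift _).const_mul _

lemma integral_phi_w (a Δ : ℝ) :
    ∫ u : ℝ, phi u * wfun a Δ u = Real.exp (a * (a - 1) * Δ ^ 2 / 2) := by
  simp_rw [phi_mul_w]
  rw [MeasureTheory.integral_const_mul, integral_add_right_eq_self, integral_phi, mul_one]

lemma int_phi_Ioo {p q : ℝ} (hpq : p ≤ q) :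
    ∫ u in Set.Ioo p q, phi u = Phi q - Phi p := by
  rw [← MeasureTheory.integral_Ioc_eq_integral_Ioo,
    ← intervalIntegral.integral_of_le hpq, Phi_eq_int, Phi_eq_int,
    intervalIntegral.integral_Iic_sub_Iic integrable_phi.integrableOn
      integrable_phi.integrableOn]

lemma int_phi_shift_Ioo {p q : ℝ} (hpq : p ≤ q) (β : ℝ) :
    ∫ u in Set.Ioo p q, phi (u + β) = Phi (q + β) - Phi (p + β) := by
  rw [← MeasureTheory.integral_Ioc_eq_integral_Ioo,
    ← intervalIntegral.integral_of_le hpq,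
    intervalIntegral.integral_comp_add_right _ β,
    Phi_eq_int, Phi_eq_int,
    intervalIntegral.integral_Iic_sub_Iic integrable_phi.integrableOn
      integrable_phi.integrableOn]

lemma Phi_sub_eq_int {p q : ℝ} : Phi q - Phi p = ∫ x in p..q, phi x := by
  rw [Phi_eq_int, Phi_eq_int, intervalIntegral.integral_Iic_sub_Iic
    integrable_phi.integrableOn integrable_phi.integrableOn]

lemma shift_compare {al ar β Δ : ℝ} (hsum : al + ar = Δ) (hΔ : 0 ≤ Δ)
    (halr : al ≤ ar) (hβ : 0 ≤ β) :
    Phi (ar + β) - Phi (al + β) ≤ Phi ar - Phi al := by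
  have h1 : Phi (ar + β) - Phi ar = ∫ x in ar..(ar + β), phi x := Phi_sub_eq_int
  have h2 : Phi (al + β) - Phi al = ∫ x in al..(al + β), phi x := Phi_sub_eq_int
  have h3 : (∫ x in al..(al + β), phi (x + (ar - al)))
      = ∫ x in ar..(ar + β), phi x := by
    rw [intervalIntegral.integral_comp_add_right]
    congr 1 <;> ring
  have h4 : (∫ x in al..(al + β), phi (x + (ar - al)))
      ≤ ∫ x in al..(al + β), phi x := by
    apply intervalIntegral.integral_mono_on (by linarith)
      ((integrable_phi_shift _).intervalIntegrable)
      (integrable_phi.intervalIntegrable)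
    intro x hx
    apply phi_le_phi
    nlinarith [hx.1]
  linarith

/-- Proposition B.5, rate of the RDP conversion of the prior trade-off
bound: for `α > 1`, `Δ > 0` and `0 < c ≤ Φ(Δ/2) - 1/2`, the trade-off function
`f(t) = max{Φ(Φ⁻¹(1-t) - Δ), 1 - t - 2c}` satisfies
`(α-1)⁻¹ log ∫₀¹ |f'(t)|^{1-α} dt ≥ 2c (αΔ²/2)`. -/
theorem stmt_18 (a Δ c : ℝ) (ha : 1 < a) (hΔ : 0 < Δ) (hc : 0 < c)
    (hint : c ≤ Phi (Δ / 2) - 1 / 2) :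
    2 * c * (a * Δ ^ 2 / 2)
      ≤ (a - 1)⁻¹ * Real.log (∫ t in (0:ℝ)..1,
          |deriv (fun s : ℝ => max (Phi (PhiInv (1 - s) - Δ)) (1 - s - 2 * c)) t| ^ (1 - a)) := by
  obtain ⟨al, hal, hchi0⟩ := exists_root hΔ hc hint
  set ar : ℝ := Δ - al with har_def
  have har : Δ / 2 ≤ ar := by rw [har_def]; linarith
  have halr : al ≤ ar := by linarith
  set β : ℝ := (a - 1) * Δ with hβ_def
  have hβ : 0 ≤ β := by nlinarith
  set K : ℝ := a * (a - 1) * Δ ^ 2 / 2 with hK_def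
  have hK : 0 ≤ K := by nlinarith
  set eK : ℝ := Real.exp K with heK_def
  have heK1 : 1 ≤ eK := Real.one_le_exp hK
  have heKpos : 0 < eK := Real.exp_pos K
  -- Step A & B: change of variables
  have hAB : (∫ t in (0:ℝ)..1,
        |deriv (fun s : ℝ => max (Phi (PhiInv (1 - s) - Δ)) (1 - s - 2 * c)) t| ^ (1 - a))
      = ∫ u : ℝ, phi u *
        |deriv (fun s : ℝ => max (Phi (PhiInv (1 - s) - Δ)) (1 - s - 2 * c)) (1 - Phi u)| ^ (1 - a) := by
    rw [intervalIntegral.integral_of_le zero_le_one,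
      MeasureTheory.integral_Ioc_eq_integral_Ioo,
      integral_Ioo_cov (fun t =>
        |deriv (fun s : ℝ => max (Phi (PhiInv (1 - s) - Δ)) (1 - s - 2 * c)) t| ^ (1 - a))]
  -- Step C: a.e. identification of the integrand
  have hae : (fun u : ℝ => phi u *
        |deriv (fun s : ℝ => max (Phi (PhiInv (1 - s) - Δ)) (1 - s - 2 * c)) (1 - Phi u)| ^ (1 - a))
      =ᵐ[volume] (fun u : ℝ => phi u * wfun a Δ u
        + (Set.Ioo al ar).indicator (fun v => phi v * (1 - wfun a Δ v)) u) := by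
    have hnull : volume {u : ℝ | chi Δ c u = 0} = 0 := by
      apply measure_mono_null (chi_zero_subset hΔ hal hchi0)
      exact ((Set.finite_singleton (Δ - al)).insert al).measure_zero _
    have hane : ∀ᵐ u : ℝ, chi Δ c u ≠ 0 := by
      rw [ae_iff]
      simpa using hnull
    filter_upwards [hane] with u hu
    rcases hu.lt_or_gt with hneg | hpos
    · have hnot : u ∉ Set.Ioo al ar := by
        intro hmem
        exact absurd (chi_pos_iff hΔ hal hchi0 u hmem.1 hmem.2) (by linarith)
      rw [Set.indicator_of_notMem hnot, add_zero, integrand_of_neg hneg]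
    · have hmem : u ∈ Set.Ioo al ar := by
        constructor
        · by_contra hle
          push_neg at hle
          rcases eq_or_lt_of_le hle with he | hlt
          · rw [← he] at hchi0; linarith
          · exact absurd (chi_neg_of_lt hΔ hal hchi0 u hlt) (by linarith)
        · by_contra hge
          push_neg at hge
          rcases eq_or_lt_of_le hge with he | hlt
          · have := chi_root_r (Δ := Δ) (c := c) (al := al) hchi0
            rw [← har_def, he] at this; linarith
          · exact absurd (chi_neg_of_gt hΔ hal hchi0 u (by rw [har_def] at hlt; exact hlt))
              (by linarith)
      rw [Set.indicator_of_mem hmem, integrand_of_pos hpos]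
      ring
  -- Step D: evaluate the integral
  have hIntInd : Integrable ((Set.Ioo al ar).indicator (fun v : ℝ => phi v * (1 - wfun a Δ v))) := by
    apply MeasureTheory.IntegrableOn.integrable_indicator _ measurableSet_Ioo
    have hcont : Continuous (fun v : ℝ => phi v * (1 - wfun a Δ v)) := by
      apply continuous_phi.mul
      apply continuous_const.sub
      unfold wfun
      fun_prop
    exact (hcont.integrableOn_Icc).mono_set Set.Ioo_subset_Icc_self
  have hD_eval : (∫ u : ℝ, (phi u * wfun a Δ u
        + (Set.Ioo al ar).indicator (fun v => phi v * (1 - wfun a Δ v)) u))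
      = eK + ((Phi ar - Phi al) - eK * (Phi (ar + β) - Phi (al + β))) := by
    rw [MeasureTheory.integral_add (integrable_phi_w a Δ) hIntInd,
      MeasureTheory.integral_indicator measurableSet_Ioo, integral_phi_w]
    congr 1
    have hsplit : ∀ v : ℝ, phi v * (1 - wfun a Δ v) = phi v - phi v * wfun a Δ v :=
      fun v => by ring
    simp_rw [hsplit]
    rw [MeasureTheory.integral_sub integrable_phi.integrableOn
      (integrable_phi_w a Δ).integrableOn, int_phi_Ioo halr]
    congr 1
    simp_rw [phi_mul_w]
    rw [MeasureTheory.integral_const_mul, int_phi_shift_Ioo halr]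
  -- Step E: the inequality
  have hD : Phi (ar + β) - Phi (al + β) ≤ Phi ar - Phi al :=
    shift_compare (by rw [har_def]; ring) hΔ.le halr hβ
  have h2c : 2 * c = Phi ar + Phi al - 1 := by
    have h1 : chi Δ c (Δ - al) = 0 := chi_root_r hchi0
    rw [← har_def] at h1
    unfold chi at h1
    have h2 : Phi (ar - Δ) = 1 - Phi al := by
      rw [show ar - Δ = -al by rw [har_def]; ring]
      linarith [Phi_add_neg al]
    linarith
  have hm0 : 0 ≤ Phi ar - Phi al := by
    have := Phi_strictMono.monotone halr
    linarith
  have hm1 : 2 * c + (Phi ar - Phi al) ≤ 1 := by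
    have := Phi_lt_one ar
    linarith
  have hconv : Real.exp (2 * c * K) ≤ (1 - 2 * c) * 1 + 2 * c * eK := by
    have h1 : (0:ℝ) ≤ 1 - 2 * c := by linarith
    have h2 : (0:ℝ) ≤ 2 * c := by linarith
    have h3 := convexOn_exp.2 (Set.mem_univ (0:ℝ)) (Set.mem_univ K) h1 h2 (by ring)
    rw [smul_eq_mul, smul_eq_mul, smul_eq_mul, smul_eq_mul, mul_zero, zero_add,
      Real.exp_zero] at h3
    exact h3
  have hT_ge : Real.exp (2 * c * K)
      ≤ eK + ((Phi ar - Phi al) - eK * (Phi (ar + β) - Phi (al + β))) := by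
    have hp1 : 0 ≤ (eK - 1) * (1 - 2 * c - (Phi ar - Phi al)) :=
      mul_nonneg (by linarith) (by linarith)
    have hp2 : 0 ≤ eK * ((Phi ar - Phi al) - (Phi (ar + β) - Phi (al + β))) :=
      mul_nonneg heKpos.le (by linarith)
    nlinarith [hconv]
  -- Conclusion
  rw [hAB, MeasureTheory.integral_congr_ae hae, hD_eval]
  have hTpos : 0 < eK + ((Phi ar - Phi al) - eK * (Phi (ar + β) - Phi (al + β))) :=
    lt_of_lt_of_le (Real.exp_pos _) hT_ge
  have hlog : 2 * c * K ≤ Real.log (eK + ((Phi ar - Phi al) - eK * (Phi (ar + β) - Phi (al + β)))) :=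
    (Real.le_log_iff_exp_le hTpos).2 hT_ge
  have hainv : (0:ℝ) < (a - 1)⁻¹ := inv_pos.2 (by linarith)
  have heq : 2 * c * (a * Δ ^ 2 / 2) = (a - 1)⁻¹ * (2 * c * K) := by
    rw [hK_def, show 2 * c * (a * (a - 1) * Δ ^ 2 / 2)
        = (a - 1) * (2 * c * (a * Δ ^ 2 / 2)) by ring,
      inv_mul_cancel_left₀ (by linarith : a - 1 ≠ 0)]
  rw [heq]
  exact mul_le_mul_of_nonneg_left hlog hainv.le
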